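/- Let T be a triangulation of a convex m-gon and H = {a,b,c} with H − 1 a triangle of T (where H − 1 = {a−1, b−1, c−1} mod m). Then for every x ∈ [m] \ H, χ_T(x, a, b, c) = −1 where a ≺ b ≺ c; consequently H is a facet of the oriented matroid M_T. -/
import Mathlib


namespace CyclicTri

variable {m : ℕ}

/-- Position of `v` relative to base point `a` in the cyclic order on `ZMod m`. -/
def pos (a v : ZMod m) : ℕ := (v - a).val

/-- `a ≺ b ≺ c` in the cyclic order. -/
def Cyc3 (a b c : ZMod m) : Prop := 0 < pos a b ∧ pos a b < pos a c

/-- `a ≺ b ≺ c ≺ d` in the cyclic order. -/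
def Cyc4 (a b c d : ZMod m) : Prop :=
  0 < pos a b ∧ pos a b < pos a c ∧ pos a c < pos a d

/-- The arcs `xy` and `x'y'` cross: their endpoints interleave cyclically. -/
def Cross (x y x' y' : ZMod m) : Prop := Cyc4 x x' y y' ∨ Cyc4 x' x y' y

/-- `xy` is a diagonal of the polygon: the endpoints are distinct and non-adjacent. -/
def Diag (x y : ZMod m) : Prop := x ≠ y ∧ y ≠ x + 1 ∧ x ≠ y + 1

/-- `A` is (the symmetrised set of arcs of) a triangulation of the convex `m`-gon:
a maximal set of pairwise non-crossing diagonals. -/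
def IsTriangulation (A : Set (ZMod m × ZMod m)) : Prop :=
  (∀ x y, (x, y) ∈ A → (y, x) ∈ A) ∧
  (∀ x y, (x, y) ∈ A → Diag x y) ∧
  (∀ x y x' y', (x, y) ∈ A → (x', y') ∈ A → ¬ Cross x y x' y') ∧
  (∀ x y, Diag x y → (∀ x' y', (x', y') ∈ A → ¬ Cross x y x' y') → (x, y) ∈ A)

/-- There is an arc `xy` of `A` with `a ≺ b ≼ x ≺ c ≺ d ≼ y` (the `+1` case of `χ_T`). -/
def PosCase (A : Set (ZMod m × ZMod m)) (a b c d : ZMod m) : Prop :=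
  ∃ x y, (x, y) ∈ A ∧ 0 < pos a b ∧ pos a b ≤ pos a x ∧ pos a x < pos a c ∧
    pos a c < pos a d ∧ pos a d ≤ pos a y

/-- There is an arc `xy` of `A` with `a ≼ x ≺ b ≺ c ≼ y ≺ d` (the `-1` case of `χ_T`). -/
def NegCase (A : Set (ZMod m × ZMod m)) (a b c d : ZMod m) : Prop :=
  ∃ x y, (x, y) ∈ A ∧ pos a x < pos a b ∧ pos a b < pos a c ∧ pos a c ≤ pos a y ∧
    pos a y < pos a d

open Classical in
/-- The chirotope `χ_T` on cyclically ordered tuples `a ≺ b ≺ c ≺ d`. -/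
noncomputable def chiCyc (A : Set (ZMod m × ZMod m)) (a b c d : ZMod m) : ℤ :=
  if PosCase A a b c d then 1 else if NegCase A a b c d then -1 else 0

end CyclicTri
namespace CyclicTri
variable {m : ℕ}

open Classical in
/-- The alternating extension `χ_T(x, a, b, c)` for `a ≺ b ≺ c` and `x ∉ {a,b,c}`. -/
noncomputable def chiX (A : Set (ZMod m × ZMod m)) (x a b c : ZMod m) : ℤ :=
  if Cyc4 x a b c then chiCyc A x a b c
  else if Cyc4 a x b c then - chiCyc A a x b c
  else chiCyc A a b x c

/-- `xy` is an arc of `B` or a boundary edge of the polygon. -/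
def EdgeOf (B : Set (ZMod m × ZMod m)) (x y : ZMod m) : Prop :=
  (x, y) ∈ B ∨ y = x + 1 ∨ x = y + 1

/-- `abc` is a triangle of the triangulation `A`: all sides are arcs or boundary edges. -/
def IsTriangleOf (A : Set (ZMod m × ZMod m)) (a b c : ZMod m) : Prop :=
  Cyc3 a b c ∧ EdgeOf A a b ∧ EdgeOf A b c ∧ EdgeOf A c a

/-- `{a,b,c}` is a facet of the oriented matroid `M_T`: the complementary cocircuit
has all of its elements of the same sign. -/
def IsFacet (A : Set (ZMod m × ZMod m)) (a b c : ZMod m) : Prop :=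
  Cyc3 a b c ∧
    ((∀ x : ZMod m, x ≠ a → x ≠ b → x ≠ c → chiX A x a b c = 1) ∨
     (∀ x : ZMod m, x ≠ a → x ≠ b → x ≠ c → chiX A x a b c = -1))

end CyclicTri


namespace CyclicTri

variable {m : ℕ} [NeZero m]

lemma pos_self' (a : ZMod m) : pos a a = 0 := by simp [pos]

lemma pos_lt' (a v : ZMod m) : pos a v < m := ZMod.val_lt _

lemma pos_pos_of_ne {a v : ZMod m} (h : v ≠ a) : 0 < pos a v := by
  rw [pos, ZMod.val_pos]; exact sub_ne_zero.mpr h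

lemma pos_inj' {a p q : ZMod m} (h : pos a p = pos a q) : p = q := by
  have h2 : p - a = q - a := ZMod.val_injective m h
  exact sub_left_inj.mp h2

lemma pos_trans_le {a p q : ZMod m} (h : pos a p ≤ pos a q) :
    pos p q = pos a q - pos a p := by
  simp only [pos] at h ⊢
  have e : q - p = (q - a) - (p - a) := by ring
  rw [e, ZMod.val_sub h]

lemma pos_trans_gt {a p q : ZMod m} (h : pos a q < pos a p) :
    pos p q = m + pos a q - pos a p := by
  simp only [pos] at h ⊢
  have hne : (p - a) - (q - a) ≠ 0 := by
    intro h0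
    rw [sub_eq_zero] at h0
    rw [h0] at h
    exact lt_irrefl _ h
  have e : q - p = -((p - a) - (q - a)) := by ring
  haveI : NeZero ((p - a) - (q - a)) := ⟨hne⟩
  rw [e, ZMod.val_neg_of_ne_zero, ZMod.val_sub (le_of_lt h)]
  have h1 := ZMod.val_lt (p - a)
  omega

lemma pos_sub_one' (hm : 1 < m) {a p : ZMod m} (h : p ≠ a) :
    pos a (p - 1) = pos a p - 1 := by
  simp only [pos]
  have e : p - 1 - a = (p - a) - 1 := by ring
  have h1 : (1 : ZMod m).val = 1 := ZMod.val_one'' (by omega)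
  have h0 : 0 < (p - a).val := by rw [ZMod.val_pos]; exact sub_ne_zero.mpr h
  rw [e, ZMod.val_sub (by omega), h1]

lemma pos_self_sub_one (hm : 1 < m) (a : ZMod m) : pos a (a - 1) = m - 1 := by
  simp only [pos]
  have e : a - 1 - a = -(1 : ZMod m) := by ring
  have h1 : (1 : ZMod m).val = 1 := ZMod.val_one'' (by omega)
  haveI : NeZero (1 : ZMod m) := ⟨by
    intro h0
    have := congrArg ZMod.val h0
    rw [h1, ZMod.val_zero] at this
    omega⟩
  rw [e, ZMod.val_neg_of_ne_zero, h1]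

lemma pos_add_one_self (hm : 1 < m) (a : ZMod m) : pos a (a + 1) = 1 := by
  simp only [pos]
  have e : a + 1 - a = 1 := by ring
  rw [e]
  exact ZMod.val_one'' (by omega)

end CyclicTri

open CyclicTri in
/-- If `H - 1 = {a-1,b-1,c-1}` is a triangle of the triangulation `T`, then
`χ_T(x,a,b,c) = -1` for every `x ∈ [m] \ H`; consequently `H = {a,b,c}` is a facet of
the oriented matroid `M_T`. -/
theorem stmt_10 (m : ℕ) (hm : 4 ≤ m) (A : Set (ZMod m × ZMod m))
    (hT : IsTriangulation A) (a b c : ZMod m) (habc : Cyc3 a b c)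
    (h : IsTriangleOf A (a - 1) (b - 1) (c - 1)) :
    (∀ x : ZMod m, x ≠ a → x ≠ b → x ≠ c → chiX A x a b c = -1) ∧
      IsFacet A a b c := by
  haveI : NeZero m := ⟨by omega⟩
  have hm1 : 1 < m := by omega
  obtain ⟨hb0, hbc0⟩ := habc
  obtain ⟨-, hab, hbc, hca⟩ := h
  have hcm : pos a c < m := pos_lt' a c
  have hbne : b ≠ a := by
    intro e; rw [e, pos_self'] at hb0; omega
  have hcne : c ≠ a := by
    intro e; rw [e, pos_self'] at hbc0; omega
  have hma : pos a (a - 1) = m - 1 := pos_self_sub_one hm1 a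
  have hmb : pos a (b - 1) = pos a b - 1 := pos_sub_one' hm1 hbne
  have hmc : pos a (c - 1) = pos a c - 1 := pos_sub_one' hm1 hcne
  have hAab : (a - 1, b - 1) ∈ A ∨ b = a + 1 := by
    rcases hab with h' | h' | h'
    · exact Or.inl h'
    · right; linear_combination h'
    · exfalso
      have hb' : b = a - 1 := by linear_combination -h'
      rw [hb', hma] at hbc0
      omega
  have hAbc : (b - 1, c - 1) ∈ A ∨ c = b + 1 := by
    rcases hbc with h' | h' | h'
    · exact Or.inl h'
    · right; linear_combination h'
    · exfalso
      have hc' : c = b - 1 := by linear_combination -h'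
      rw [hc', hmb] at hbc0
      omega
  have hAca : (c - 1, a - 1) ∈ A ∨ pos a c = m - 1 := by
    rcases hca with h' | h' | h'
    · exact Or.inl h'
    · right
      have hc' : c = a - 1 := by linear_combination -h'
      rw [hc', hma]
    · exfalso
      have hc' : c = a + 1 := by linear_combination h'
      rw [hc', pos_add_one_self hm1] at hbc0
      omega
  have main : ∀ x : ZMod m, x ≠ a → x ≠ b → x ≠ c → chiX A x a b c = -1 := by
    intro x hxa hxb hxc
    have hx0 : 0 < pos a x := pos_pos_of_ne hxa
    have hxm : pos a x < m := pos_lt' a x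
    have hxnb : pos a x ≠ pos a b := fun hh => hxb (pos_inj' hh)
    have hxnc : pos a x ≠ pos a c := fun hh => hxc (pos_inj' hh)
    have hxa' : pos x a = m - pos a x := by
      have e := pos_trans_gt (a := a) (p := x) (q := a) (by rw [pos_self']; exact hx0)
      rw [pos_self'] at e
      omega
    rcases Nat.lt_trichotomy (pos a x) (pos a b) with h1 | h1 | h1
    · -- Case 1 : x strictly between a and b
      have hArc : (b - 1, a - 1) ∈ A := by
        rcases hAab with h' | h'
        · exact hT.1 _ _ h'
        · exfalso; rw [h', pos_add_one_self hm1] at h1; omega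
      have hxb' : pos x b = pos a b - pos a x := pos_trans_le (le_of_lt h1)
      have hnc4 : ¬ Cyc4 x a b c := by
        rintro ⟨u1, u2, u3⟩
        rw [hxa', hxb'] at u2
        omega
      have hc4 : Cyc4 a x b c := ⟨hx0, h1, hbc0⟩
      have hpos : PosCase A a x b c := by
        refine ⟨b - 1, a - 1, hArc, hx0, ?_, ?_, hbc0, ?_⟩
        · rw [hmb]; omega
        · rw [hmb]; omega
        · rw [hma]; omega
      simp only [chiX, if_neg hnc4, if_pos hc4, chiCyc, if_pos hpos]
    · exact absurd h1 hxnb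
    · rcases Nat.lt_trichotomy (pos a x) (pos a c) with h2 | h2 | h2
      · -- Case 2 : x strictly between b and c
        have hArc : (b - 1, c - 1) ∈ A := by
          rcases hAbc with h' | h'
          · exact h'
          · exfalso
            have e : c - 1 = b := by rw [h']; ring
            rw [e] at hmc
            omega
        have hxb' : pos x b = m + pos a b - pos a x := pos_trans_gt h1
        have hxc' : pos x c = pos a c - pos a x := pos_trans_le (le_of_lt h2)
        have hnc4 : ¬ Cyc4 x a b c := by
          rintro ⟨u1, u2, u3⟩
          rw [hxb', hxc'] at u3
          omega
        have hnc4' : ¬ Cyc4 a x b c := by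
          rintro ⟨-, u2, -⟩
          omega
        have hneg : NegCase A a b x c := by
          refine ⟨b - 1, c - 1, hArc, ?_, h1, ?_, ?_⟩
          · rw [hmb]; omega
          · rw [hmc]; omega
          · rw [hmc]; omega
        have hnpos : ¬ PosCase A a b x c := by
          rintro ⟨u, v, huv, -, h3, h4, -, h6⟩
          have hvm : pos a v < m := pos_lt' a v
          refine hT.2.2.1 _ _ _ _ hArc huv (Or.inl ?_)
          have e1 : pos (b - 1) u = pos a u - pos a (b - 1) :=
            pos_trans_le (by rw [hmb]; omega)
          have e2 : pos (b - 1) (c - 1) = pos a (c - 1) - pos a (b - 1) :=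
            pos_trans_le (by rw [hmb, hmc]; omega)
          have e3 : pos (b - 1) v = pos a v - pos a (b - 1) :=
            pos_trans_le (by rw [hmb]; omega)
          refine ⟨?_, ?_, ?_⟩
          · rw [e1, hmb]; omega
          · rw [e1, e2, hmb, hmc]; omega
          · rw [e2, e3, hmb, hmc]; omega
        simp only [chiX, if_neg hnc4, if_neg hnc4', chiCyc, if_neg hnpos, if_pos hneg]
      · exact absurd h2 hxnc
      · -- Case 3 : x strictly between c and a
        have hArc : (c - 1, a - 1) ∈ A := by
          rcases hAca with h' | h'
          · exact h'
          · omega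
        have hArc' : (a - 1, c - 1) ∈ A := hT.1 _ _ hArc
        have hxb' : pos x b = m + pos a b - pos a x := pos_trans_gt h1
        have hxc' : pos x c = m + pos a c - pos a x := pos_trans_gt h2
        have hc4 : Cyc4 x a b c := by
          refine ⟨?_, ?_, ?_⟩
          · rw [hxa']; omega
          · rw [hxa', hxb']; omega
          · rw [hxb', hxc']; omega
        have hneg : NegCase A x a b c := by
          refine ⟨a - 1, c - 1, hArc', ?_, ?_, ?_, ?_⟩
          · have e : pos x (a - 1) = pos a (a - 1) - pos a x :=
              pos_trans_le (by rw [hma]; omega)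
            rw [e, hma, hxa']; omega
          · rw [hxa', hxb']; omega
          · have e : pos x (c - 1) = m + pos a (c - 1) - pos a x :=
              pos_trans_gt (by rw [hmc]; omega)
            rw [e, hmc, hxb']; omega
          · have e : pos x (c - 1) = m + pos a (c - 1) - pos a x :=
              pos_trans_gt (by rw [hmc]; omega)
            rw [e, hmc, hxc']; omega
        have hnpos : ¬ PosCase A x a b c := by
          rintro ⟨u, v, huv, -, h3, h4, h5, h6⟩
          have hum : pos a u < m := pos_lt' a u
          have hvm : pos a v < m := pos_lt' a v
          have hub : pos a u < pos a b := by
            rcases Nat.lt_or_ge (pos a u) (pos a x) with hc | hc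
            · rw [pos_trans_gt hc, hxb'] at h4; omega
            · rw [pos_trans_le hc, hxa'] at h3; omega
          have hvb : pos a c ≤ pos a v ∧ pos a v < pos a x := by
            rcases Nat.lt_or_ge (pos a v) (pos a x) with hc | hc
            · rw [pos_trans_gt hc, hxc'] at h6; omega
            · rw [pos_trans_le hc, hxc'] at h6; omega
          obtain ⟨hv1, hv2⟩ := hvb
          refine hT.2.2.1 _ _ _ _ hArc' huv (Or.inl ?_)
          have e1 : pos (a - 1) u = m + pos a u - pos a (a - 1) :=
            pos_trans_gt (by rw [hma]; omega)
          have e2 : pos (a - 1) (c - 1) = m + pos a (c - 1) - pos a (a - 1) :=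
            pos_trans_gt (by rw [hma, hmc]; omega)
          have e3 : pos (a - 1) v = m + pos a v - pos a (a - 1) :=
            pos_trans_gt (by rw [hma]; omega)
          refine ⟨?_, ?_, ?_⟩
          · rw [e1, hma]; omega
          · rw [e1, e2, hma, hmc]; omega
          · rw [e2, e3, hma, hmc]; omega
        simp only [chiX, if_pos hc4, chiCyc, if_neg hnpos, if_pos hneg]
  exact ⟨main, ⟨hb0, hbc0⟩, Or.inr main⟩
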